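/- Let p be a prime and G a finite p-group containing an abelian subgroup G' of index p (such a subgroup is automatically normal in G). Then every irreducible finite-dimensional complex representation ρ of G satisfies one of the following: either ρ is one-dimensional (so its character is a group homomorphism G → ℂˣ, inflated from a character of the abelianization G^{ab}), or there exists a group homomorphism β : G' → ℂˣ such that the character of ρ equals the induced class function Ind_{G'}^G β. -/

import Mathlib

open scoped Classical

/-- The class function on `G` induced from a complex-valued function `φ` on a
subgroup `W ≤ G`: `(Ind_W^G φ)(g) = |W|⁻¹ ∑_{x ∈ G, x⁻¹gx ∈ W} φ(x⁻¹gx)`. -/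
noncomputable def indCF {G : Type*} [Group G] (W : Subgroup G) (φ : W → ℂ) : G → ℂ :=
  fun g => (Nat.card W : ℂ)⁻¹ *
    ∑ᶠ x : G, if h : x⁻¹ * g * x ∈ W then φ ⟨x⁻¹ * g * x, h⟩ else 0

/-- A finite-dimensional complex representation is irreducible if it is nonzero and has
no invariant subspaces other than `0` and the whole space. -/
def IsIrreducibleRep {G V : Type*} [Group G] [AddCommGroup V] [Module ℂ V]
    (ρ : Representation ℂ G V) : Prop :=
  (∃ v : V, v ≠ 0) ∧
    ∀ p : Submodule ℂ V, (∀ (g : G), ∀ v ∈ p, ρ g v ∈ p) → p = ⊥ ∨ p = ⊤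

/-!
`G'` is normal because its index `p` is the smallest prime dividing `|G|`.
Let `v₀` be a common eigenvector of the abelian normal subgroup `A = G'`, with character `χ`.
As `A` has prime index, the inertia group of `χ` (the `x` with `χ (x a x⁻¹) = χ a`) is `A` or `G`.
If it is `G`, the `χ`-weight space is `G`-stable, hence all of `V`: then `A` acts by scalars,
an eigenvector of any `g₀ ∉ A` spans a `G`-stable line, and `V` is that line.
If it is `A`, the vectors `ρ r v₀`, for `r` running over a transversal of `G ⧸ A`, are
eigenvectors of `A` for pairwise distinct conjugates of `χ`, hence a basis on which `G` acts
monomially, and the trace in this basis is the formula for the induced character.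
-/

namespace Module.End

variable {ι K V : Type*} [Field K] [AddCommGroup V] [Module K V]

theorem exists_ne_zero_forall_apply_eq_smul_of_commute [IsAlgClosed K] [FiniteDimensional K V]
    [Nontrivial V] (f : ι → End K V) (hf : ∀ i j, Commute (f i) (f j)) :
    ∃ v ≠ (0 : V), ∀ i, ∃ c : K, f i v = c • v := by
  set S : Set (Submodule K V) := {W | W ≠ ⊥ ∧ ∀ i, ∀ w ∈ W, f i w ∈ W}
  obtain ⟨W, ⟨hW0, hWf⟩, hWmin⟩ :=
    wellFounded_lt.has_min S ⟨⊤, top_ne_bot, fun _ _ _ => Submodule.mem_top⟩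
  -- a minimal invariant subspace is a common eigenspace, since each eigenspace of `f i` in it
  -- is again invariant
  have hscalar (i : ι) : ∃ c : K, ∀ w ∈ W, f i w = c • w := by
    have : Nontrivial W := Submodule.nontrivial_iff_ne_bot.mpr hW0
    obtain ⟨c, hc⟩ := exists_eigenvalue ((f i).restrict (hWf i))
    obtain ⟨w₀, hw₀⟩ := hc.exists_hasEigenvector
    set E := W ⊓ (f i).eigenspace c
    have hw₀E : (w₀ : V) ∈ E := ⟨w₀.2, by
      simpa [mem_eigenspace_iff, Subtype.ext_iff] using hw₀.apply_eq_smul⟩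
    have hES : E ∈ S := by
      refine ⟨fun h => hw₀.2 (Subtype.ext ?_), fun j w hw => ⟨hWf j w hw.1, ?_⟩⟩
      · simpa [h] using hw₀E
      · exact mapsTo_genEigenspace_of_comm (hf i j) c 1 hw.2
    have hEW : E = W := (inf_le_left.lt_or_eq).resolve_left (hWmin E hES)
    exact ⟨c, fun w hw => mem_eigenspace_iff.mp (hEW ▸ hw : w ∈ E).2⟩
  obtain ⟨v, hvW, hv⟩ := Submodule.exists_mem_ne_zero_of_ne_bot hW0
  exact ⟨v, hv, fun i => (hscalar i).imp fun c hc => hc v hvW⟩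

theorem linearIndependent_of_forall_apply_eq_smul {κ : Type*} (f : κ → End K V)
    (χ : ι → κ → K) (hχ : Function.Injective χ) (v : ι → V) (hv0 : ∀ i, v i ≠ 0)
    (hv : ∀ i k, f k (v i) = χ i k • v i) : LinearIndependent K v :=
  ((iSupIndep.iInf (fun k => (f k).eigenspace) fun k => (f k).eigenspaces_iSupIndep).comp hχ
    ).linearIndependent _ (fun i => Submodule.mem_iInf _ |>.mpr fun k =>
      mem_eigenspace_iff.mpr (hv i k)) hv0

end Module.End

namespace Subgroup

variable {G : Type*} [Group G]

theorem eq_or_eq_top_of_le_of_index_prime {H K : Subgroup G} (hHK : H ≤ K)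
    (hp : H.index.Prime) : K = H ∨ K = ⊤ := by
  rcases hp.eq_one_or_self_of_dvd _ (index_dvd_of_le hHK) with h | h
  · exact .inr (index_eq_one.mp h)
  · have : H.FiniteIndex := ⟨hp.ne_zero⟩
    exact .inl (hHK.lt_or_eq.resolve_left fun hlt => (index_strictAnti hlt).ne h).symm

section Inertia

variable (A : Subgroup G) [A.Normal] {M : Type*}

def inertiaGroup (χ : A → M) : Subgroup G where
  carrier := {x | ∀ a, χ (MulAut.conjNormal x a) = χ a}
  one_mem' a := by simp
  mul_mem' {x y} hx hy a := by rw [map_mul, MulAut.mul_apply, hx, hy]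
  inv_mem' {x} hx a := by rw [← hx, map_inv, MulAut.apply_inv_self]

theorem le_inertiaGroup [IsMulCommutative A] (χ : A → M) : A ≤ A.inertiaGroup χ := by
  intro x hx a
  congr 1
  ext
  rw [MulAut.conjNormal_apply, setLike_mul_comm hx a.2, mul_inv_cancel_right]

theorem inv_mul_mem_inertiaGroup {χ : A → M} {x y : G}
    (h : ∀ a, χ (MulAut.conjNormal x⁻¹ a) = χ (MulAut.conjNormal y⁻¹ a)) :
    x⁻¹ * y ∈ A.inertiaGroup χ := fun a => by
  simpa [MulAut.mul_apply] using h (MulAut.conjNormal y a)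

end Inertia

section Transversal

variable {ι : Type*} {H : Subgroup G} {r : ι → G}

theorem inv_mul_mul_mem_iff (hr : Function.Bijective fun x : ι × H => r x.1 * x.2) (i j : ι)
    (u : H) : (r i)⁻¹ * (r j * u) ∈ H ↔ i = j := by
  refine ⟨fun h => ?_, fun hij => by simp [hij]⟩
  have := @hr.1 (j, u) (i, ⟨_, h⟩) (by simp)
  exact (congrArg Prod.fst this).symm

variable (H) in
theorem bijective_out_mul : Function.Bijective fun x : (G ⧸ H) × H => x.1.out * x.2 := by
  refine ⟨fun ⟨q, u⟩ ⟨q', u'⟩ h => ?_, fun g => ?_⟩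
  · have hq : q = q' := by
      simpa [QuotientGroup.mk_mul_of_mem _ u.2, QuotientGroup.mk_mul_of_mem _ u'.2] using
        congrArg (QuotientGroup.mk (s := H)) h
    subst hq
    simpa using h
  · obtain ⟨u, hu⟩ := QuotientGroup.mk_out_eq_mul H g
    exact ⟨((g : G ⧸ H), u⁻¹), by simp [hu]⟩

end Transversal

end Subgroup

theorem IsPGroup.normal_of_index_eq {p : ℕ} [Fact p.Prime] {G : Type*} [Group G] [Finite G]
    (hG : IsPGroup p G) {H : Subgroup G} (hH : H.index = p) : H.Normal := by
  obtain ⟨n, hn⟩ := IsPGroup.iff_card.mp hG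
  have hn0 : n ≠ 0 := by
    rintro rfl
    have := hH ▸ H.index_dvd_card
    rw [hn, pow_zero, Nat.dvd_one] at this
    exact (Fact.out : p.Prime).ne_one this
  apply Subgroup.normal_of_index_eq_minFac_card
  rw [hH, hn, (Fact.out : p.Prime).pow_minFac hn0]

theorem indCF_eq_sum_transversal {G ι : Type*} [Group G] [Finite G] [Fintype ι] {H : Subgroup G}
    {r : ι → G} (hr : Function.Bijective fun x : ι × H => r x.1 * x.2) {φ : H → ℂ}
    (hφ : ∀ u a : H, φ (u⁻¹ * a * u) = φ a) (g : G) :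
    indCF H φ g = ∑ i, if h : (r i)⁻¹ * g * r i ∈ H then φ ⟨_, h⟩ else 0 := by
  have : Fintype G := Fintype.ofFinite G
  have : Fintype H := Fintype.ofFinite H
  set f : G → ℂ := fun x => if h : x⁻¹ * g * x ∈ H then φ ⟨_, h⟩ else 0
  have hconj (x : G) (u : H) :
      (x * u)⁻¹ * g * (x * u) = (u : G)⁻¹ * (x⁻¹ * g * x) * u := by group
  have hmem (x : G) (u : H) : (x * u)⁻¹ * g * (x * u) ∈ H ↔ x⁻¹ * g * x ∈ H := by
    rw [hconj, H.mul_mem_cancel_right u.2, H.mul_mem_cancel_left (H.inv_mem u.2)]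
  have hf (i : ι) (u : H) : f (r i * u) = f (r i) := by
    by_cases h : (r i)⁻¹ * g * r i ∈ H
    · simp only [f, dif_pos h, dif_pos ((hmem _ _).mpr h), ← hφ u ⟨_, h⟩]
      congr 2
      exact hconj _ _
    · simp only [f, dif_neg h, dif_neg ((hmem _ _).not.mpr h)]
  change (Nat.card H : ℂ)⁻¹ * ∑ᶠ x, f x = ∑ i, f (r i)
  rw [finsum_eq_sum_of_fintype, ← hr.sum_comp, Fintype.sum_prod_type]
  simp only [hf, Finset.sum_const, Finset.card_univ, nsmul_eq_mul, ← Finset.mul_sum, ← mul_assoc]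
  rw [Nat.card_eq_fintype_card, inv_mul_cancel₀ (by simp), one_mul]

namespace Representation

variable {K G V : Type*} [Field K] [AddCommGroup V] [Module K V]

section Monoid

variable [Monoid G] (ρ : Representation K G V)

theorem exists_monoidHom_of_forall_apply_eq_smul {v : V} (hv : v ≠ 0)
    (h : ∀ g, ∃ c : K, ρ g v = c • v) : ∃ χ : G →* K, ∀ g, ρ g v = χ g • v := by
  choose c hc using h
  have hinj : ∀ a b : K, a • v = b • v → a = b := fun a b h => smul_left_injective K hv h
  refine ⟨{ toFun := c, map_one' := ?_, map_mul' := fun g h => ?_ }, hc⟩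
  · exact hinj _ _ (by rw [← hc, map_one, one_smul]; rfl)
  · exact hinj _ _ (by rw [← hc, map_mul, Module.End.mul_apply, hc, map_smul, hc, smul_smul,
      mul_comm])

theorem exists_eigencharacter [IsMulCommutative G] [IsAlgClosed K] [FiniteDimensional K V]
    [Nontrivial V] : ∃ (χ : G →* K) (v : V), v ≠ 0 ∧ ∀ g, ρ g v = χ g • v := by
  obtain ⟨v, hv, hc⟩ := Module.End.exists_ne_zero_forall_apply_eq_smul_of_commute ρ
    fun g h => by rw [Commute, SemiconjBy, ← map_mul, ← map_mul, IsMulCommutative.is_comm.comm]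
  obtain ⟨χ, hχ⟩ := ρ.exists_monoidHom_of_forall_apply_eq_smul hv hc
  exact ⟨χ, v, hv, hχ⟩

end Monoid

section Group

variable [Group G] (ρ : Representation K G V)

theorem apply_apply_eq_conjNormal_smul {A : Subgroup G} [A.Normal] {χ : A → K} {v : V}
    (hv : ∀ a : A, ρ a v = χ a • v) (x : G) (a : A) :
    ρ a (ρ x v) = χ (MulAut.conjNormal x⁻¹ a) • ρ x v := by
  have : (a : G) * x = x * (MulAut.conjNormal x⁻¹ a : A) := by simp [mul_assoc]
  rw [← Module.End.mul_apply, ← map_mul, this, map_mul, Module.End.mul_apply, hv, map_smul]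

def lineStabilizer (v : V) : Subgroup G where
  carrier := {g | ∃ c : K, ρ g v = c • v}
  one_mem' := ⟨1, by simp⟩
  mul_mem' {g h} := fun ⟨a, ha⟩ ⟨b, hb⟩ =>
    ⟨a * b, by rw [map_mul, Module.End.mul_apply, hb, map_smul, ha, smul_smul, mul_comm]⟩
  inv_mem' {g} := fun ⟨c, hc⟩ => ⟨c⁻¹, by
    have hv : c • ρ g⁻¹ v = v := by rw [← map_smul, ← hc, inv_self_apply]
    rcases eq_or_ne c 0 with rfl | hc0
    · simp [show v = 0 by simpa using hv.symm]
    · rwa [eq_inv_smul_iff₀ hc0]⟩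

section Transversal

variable {ι : Type*} {H : Subgroup G} {r : ι → G}
  (hr : Function.Bijective fun x : ι × H => r x.1 * x.2)
  {χ : H → K} {v₀ : V} (hv₀ : ∀ u : H, ρ u v₀ = χ u • v₀)
include hr hv₀

theorem exists_apply_transversal_eq_smul (g : G) (i : ι) :
    ∃ j, ∃ u : H, g * r i = r j * u ∧ ρ g (ρ (r i) v₀) = χ u • ρ (r j) v₀ := by
  obtain ⟨⟨j, u⟩, hju⟩ := hr.2 (g * r i)
  refine ⟨j, u, hju.symm, ?_⟩
  rw [← Module.End.mul_apply, ← map_mul, ← hju, map_mul, Module.End.mul_apply, hv₀, map_smul]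

theorem apply_mem_span_transversal (g : G) {v : V}
    (hv : v ∈ Submodule.span K (Set.range fun i => ρ (r i) v₀)) :
    ρ g v ∈ Submodule.span K (Set.range fun i => ρ (r i) v₀) := by
  refine (Submodule.map_span_le _ _ _).mpr ?_ ⟨v, hv, rfl⟩
  rintro _ ⟨i, rfl⟩
  obtain ⟨j, u, -, h⟩ := ρ.exists_apply_transversal_eq_smul hr hv₀ g i
  exact h ▸ Submodule.smul_mem _ _ (Submodule.subset_span ⟨j, rfl⟩)

theorem trace_eq_sum_transversal [Fintype ι] (b : Module.Basis ι K V)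
    (hb : ∀ i, b i = ρ (r i) v₀) (g : G) :
    LinearMap.trace K V (ρ g) = ∑ i, if h : (r i)⁻¹ * g * r i ∈ H then χ ⟨_, h⟩ else 0 := by
  rw [LinearMap.trace_eq_matrix_trace K b, Matrix.trace]
  refine Finset.sum_congr rfl fun i _ => ?_
  obtain ⟨j, u, hgr, h⟩ := ρ.exists_apply_transversal_eq_smul hr hv₀ g i
  have hmem : (r i)⁻¹ * g * r i ∈ H ↔ i = j := by
    rw [mul_assoc, hgr, Subgroup.inv_mul_mul_mem_iff hr]
  rw [Matrix.diag_apply, LinearMap.toMatrix_apply, hb, h, ← hb, map_smul, b.repr_self]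
  by_cases hij : i = j
  · subst hij
    rw [dif_pos (hmem.mpr rfl)]
    simp [mul_assoc, hgr]
  · rw [dif_neg (hmem.not.mpr hij)]
    simp [Ne.symm hij]

end Transversal

end Group

end Representation

namespace IsIrreducibleRep

variable {G V : Type*} [Group G] [AddCommGroup V] [Module ℂ V] {ρ : Representation ℂ G V}

theorem eq_top (hirr : IsIrreducibleRep ρ) {W : Submodule ℂ V}
    (hW : ∀ g, ∀ v ∈ W, ρ g v ∈ W) {v : V} (hvW : v ∈ W) (hv : v ≠ 0) : W = ⊤ :=
  (hirr.2 W hW).resolve_left fun h => hv (by simpa [h] using hvW)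

theorem finrank_eq_one_of_lineStabilizer_eq_top [FiniteDimensional ℂ V]
    (hirr : IsIrreducibleRep ρ) {v : V} (hv : v ≠ 0) (htop : ρ.lineStabilizer v = ⊤) :
    Module.finrank ℂ V = 1 ∧ ∃ α : G →* ℂˣ, ∀ g, LinearMap.trace ℂ V (ρ g) = α g := by
  obtain ⟨α, hα⟩ := ρ.exists_monoidHom_of_forall_apply_eq_smul hv fun g =>
    (htop ▸ Subgroup.mem_top g : g ∈ ρ.lineStabilizer v)
  have hspan : ℂ ∙ v = ⊤ := by
    refine hirr.eq_top (fun g w hw => ?_) (Submodule.mem_span_singleton_self v) hv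
    obtain ⟨t, rfl⟩ := Submodule.mem_span_singleton.mp hw
    rw [map_smul, hα, smul_smul]
    exact Submodule.smul_mem _ _ (Submodule.mem_span_singleton_self v)
  have hrank : Module.finrank ℂ V = 1 := by
    rw [← finrank_top, ← hspan, finrank_span_singleton hv]
  have hρ (g : G) : ρ g = α g • LinearMap.id := by
    ext w
    obtain ⟨t, rfl⟩ := Submodule.mem_span_singleton.mp (hspan ▸ Submodule.mem_top : w ∈ ℂ ∙ v)
    rw [map_smul, hα, LinearMap.smul_apply, LinearMap.id_apply, smul_comm]
  exact ⟨hrank, α.toHomUnits, fun g => by simp [hρ, hrank]⟩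

theorem exists_lineStabilizer_eq_top [FiniteDimensional ℂ V] (hirr : IsIrreducibleRep ρ)
    {A : Subgroup G} [A.Normal] (hA : A.index.Prime) {χ : A → ℂ} {v₀ : V} (hv₀ : v₀ ≠ 0)
    (hχ : ∀ a : A, ρ a v₀ = χ a • v₀) (hT : A.inertiaGroup χ = ⊤) :
    ∃ v ≠ 0, ρ.lineStabilizer v = ⊤ := by
  have hweight : ⨅ a : A, Module.End.eigenspace (ρ a) (χ a) = ⊤ := by
    refine hirr.eq_top (fun g v hv => ?_) (by simpa using hχ) hv₀
    simp only [Submodule.mem_iInf, Module.End.mem_eigenspace_iff] at hv ⊢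
    intro a
    have hg : g⁻¹ ∈ A.inertiaGroup χ := hT ▸ Subgroup.mem_top g⁻¹
    rw [ρ.apply_apply_eq_conjNormal_smul hv, hg a]
  have hscalar (a : A) (v : V) : ρ a v = χ a • v := by
    have := hweight ▸ Submodule.mem_top (x := v)
    simp only [Submodule.mem_iInf, Module.End.mem_eigenspace_iff] at this
    exact this a
  obtain ⟨g₀, hg₀⟩ := SetLike.exists_not_mem_of_ne_top A
    (fun h => hA.ne_one (Subgroup.index_eq_one.mpr h))
  have : Nontrivial V := nontrivial_of_ne v₀ 0 hv₀
  obtain ⟨c, hc⟩ := Module.End.exists_eigenvalue (ρ g₀)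
  obtain ⟨v, hv⟩ := hc.exists_hasEigenvector
  refine ⟨v, hv.2, (Subgroup.eq_or_eq_top_of_le_of_index_prime (fun a ha => ?_) hA).resolve_left
    fun h => hg₀ (h ▸ ⟨c, hv.apply_eq_smul⟩)⟩
  exact ⟨χ ⟨a, ha⟩, hscalar ⟨a, ha⟩ v⟩

theorem trace_eq_indCF [Finite G] (hirr : IsIrreducibleRep ρ) {A : Subgroup G} [A.Normal]
    {χ : A →* ℂ} {v₀ : V} (hv₀ : v₀ ≠ 0) (hχ : ∀ a : A, ρ a v₀ = χ a • v₀)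
    (hT : A.inertiaGroup χ = A) (g : G) : LinearMap.trace ℂ V (ρ g) = indCF A χ g := by
  have : Fintype (G ⧸ A) := Fintype.ofFinite _
  have hr := Subgroup.bijective_out_mul A
  set w : G ⧸ A → V := fun q => ρ q.out v₀
  have hli : LinearIndependent ℂ w := by
    refine Module.End.linearIndependent_of_forall_apply_eq_smul (fun a : A => ρ a)
      (fun (q : G ⧸ A) (a : A) => χ (MulAut.conjNormal q.out⁻¹ a)) (fun q q' h => ?_) w
      (fun q h => hv₀ (by simpa [w] using congrArg (ρ q.out⁻¹) h))
      (fun q a => ρ.apply_apply_eq_conjNormal_smul hχ _ a)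
    have := hT ▸ A.inv_mul_mem_inertiaGroup (χ := χ) (congrFun h)
    rwa [← mul_one q'.out, ← A.coe_one, Subgroup.inv_mul_mul_mem_iff hr] at this
  have hspan : Submodule.span ℂ (Set.range w) = ⊤ :=
    hirr.eq_top (fun g v hv => ρ.apply_mem_span_transversal hr hχ g hv)
      (Submodule.subset_span ⟨1, rfl⟩) (hli.ne_zero 1)
  have hclass (u a : A) : χ (u⁻¹ * a * u) = χ a := by
    rw [map_mul, map_mul, mul_right_comm, ← map_mul, inv_mul_cancel, map_one, one_mul]
  rw [ρ.trace_eq_sum_transversal hr hχ (.mk hli hspan.ge) (fun q => Module.Basis.mk_apply _ _ q),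
    indCF_eq_sum_transversal hr hclass g]

end IsIrreducibleRep

/-- Let `p` be a prime and `G` a finite `p`-group with an abelian subgroup `G'` of
index `p`. Then `G'` is normal in `G`, and every irreducible finite-dimensional complex
representation `ρ` of `G` is either one-dimensional (so its character is a group
homomorphism `G → ℂˣ`) or its character is induced from a one-dimensional character
`β : G' → ℂˣ`. -/
theorem irreducible_of_abelian_index_p {p : ℕ} (hp : p.Prime) {G : Type*} [Group G]
    [Finite G] (hG : IsPGroup p G) (G' : Subgroup G) (hab : IsMulCommutative G')
    (hidx : G'.index = p)
    (V : Type*) [AddCommGroup V] [Module ℂ V] [FiniteDimensional ℂ V]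
    (ρ : Representation ℂ G V) (hirr : IsIrreducibleRep ρ) :
    G'.Normal ∧
      ((Module.finrank ℂ V = 1 ∧
          ∃ α : G →* ℂˣ, ∀ g : G, LinearMap.trace ℂ V (ρ g) = α g) ∨
        (∃ β : G' →* ℂˣ, ∀ g : G,
          LinearMap.trace ℂ V (ρ g) = indCF G' (fun u => ((β u : ℂˣ) : ℂ)) g)) := by
  have : Fact p.Prime := ⟨hp⟩
  have := hab
  have hA : G'.Normal := hG.normal_of_index_eq hidx
  refine ⟨hA, ?_⟩
  obtain ⟨v, hv⟩ := hirr.1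
  have : Nontrivial V := nontrivial_of_ne v 0 hv
  obtain ⟨χ, v₀, hv₀, hχ⟩ := Representation.exists_eigencharacter (ρ.comp G'.subtype)
  rcases G'.eq_or_eq_top_of_le_of_index_prime (G'.le_inertiaGroup χ) (hidx ▸ hp) with hT | hT
  · exact .inr ⟨χ.toHomUnits, fun g => by simpa using hirr.trace_eq_indCF hv₀ hχ hT g⟩
  · obtain ⟨v₁, hv₁, htop⟩ := hirr.exists_lineStabilizer_eq_top (hidx ▸ hp) hv₀ hχ hT
    exact .inl (hirr.finrank_eq_one_of_lineStabilizer_eq_top hv₁ htop)
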